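/- Let G = (V,E) be a graph and P_G the program from the W[1]-hardness reduction with parameter k. If P_G has a sequentially consistent interleaving (with any number of preemptions), then G has an independent set of size k. -/

import Mathlib

/-!
Let `c_j` be the moment at which `Checker_j` reads `x_j = 0`. Only `Sel_j` writes `0` to `x_j`,
inside some block `B_{v_j}^j`, and that block's `w(x_j, 1)` cannot come between the write and
`c_j`; so at time `c_j` the selector `Sel_j` sits between the two sweeps of `B_{v_j}^j`. The
checkers run in the order `0, 1, …, k-1` (each waits for `p_j`), and `s = 1`, which a selector
reads to enter the middle of a block, holds only before `Checker_0` resets it or after the last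
checker has run. Hence all selectors sit between their two sweeps at the single time `c_0`.
If `v_i` and `v_j` shared an edge `e`, then `Sel_i` and `Sel_j` would both have written their own
value to `y_e` before `c_0` and read it back after `c_0`, which is impossible. Since every vertex
has a neighbour, the same argument shows that the `v_j` are distinct.
-/

/-- Memory events: reads and writes of natural-number values to variables of type `V`. -/
inductive Event (V : Type) where
  | read  (x : V) (d : ℕ)
  | write (x : V) (d : ℕ)
deriving DecidableEq

variable {V ι : Type}

/-- A sequence of events is sequentially consistent (SC): every read `r(x,d)` has a
preceding write `w(x,d)` with no write of a different value to `x` in between. -/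
def SC (σ : List (Event V)) : Prop :=
  ∀ p x d, σ[(p : ℕ)]? = some (Event.read x d) →
    ∃ q, q < p ∧ σ[q]? = some (Event.write x d) ∧
      ∀ r, q < r → r < p → ∀ d', d' ≠ d → σ[r]? ≠ some (Event.write x d')

/-- `σ` is an interleaving of the given threads: its restriction to each
thread identifier equals that thread's event sequence. -/
def IsInterleaving [DecidableEq ι] (threads : ι → List (Event V)) (σ : List (ι × Event V)) : Prop :=
  ∀ i, σ.filterMap (fun a => if a.1 = i then some a.2 else none) = threads i

/-- A preemption occurs at position `j`: the events at `j` and `j+1` are from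
different threads and the event at `j` is not the last event of its thread. -/
def PreemptionAt (σ : List (ι × Event V)) (j : ℕ) : Prop :=
  ∃ a b, σ[j]? = some a ∧ σ[j + 1]? = some b ∧ a.1 ≠ b.1 ∧
    ∃ r c, j < r ∧ σ[r]? = some c ∧ c.1 = a.1

open Classical in
/-- The number of preemption positions of `σ`. -/
noncomputable def numPreemptions (σ : List (ι × Event V)) : ℕ :=
  ((Finset.range σ.length).filter fun j => PreemptionAt σ j).card

open Classical in
/-- The number of context switches of `σ` (adjacent events of different threads). -/
noncomputable def numSwitches (σ : List (ι × Event V)) : ℕ :=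
  ((Finset.range σ.length).filter fun j =>
    ∃ a b, σ[j]? = some a ∧ σ[j + 1]? = some b ∧ a.1 ≠ b.1).card

/-- The (increasing) list of positions of `σ` carrying events of thread `i`. -/
def threadPositions [DecidableEq ι] (σ : List (ι × Event V)) (i : ι) : List ℕ :=
  (List.range σ.length).filter fun p => decide ((σ[p]?).map Prod.fst = some i)

/-- The position in `σ` of the `j`-th event of thread `i`. -/
def posOf [DecidableEq ι] (σ : List (ι × Event V)) (i : ι) (j : ℕ) : ℕ :=
  (threadPositions σ i).getD j 0

/-- All events of thread `t` occur before all events of thread `t'` in `σ`. -/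
def ThreadBefore [DecidableEq ι] (σ : List (ι × Event V)) (t t' : ι) : Prop :=
  ∀ p ∈ threadPositions σ t, ∀ q ∈ threadPositions σ t', p < q

/-- The event is a write to variable `x`. -/
def writesTo (x : V) : Event V → Prop
  | Event.write y _ => y = x
  | _ => False

/-- A 1-writer program: for each variable, a single thread performs all writes to it. -/
def OneWriter (threads : ι → List (Event V)) : Prop :=
  ∀ x i i', (∃ e ∈ threads i, writesTo x e) → (∃ e ∈ threads i', writesTo x e) → i = i'

/-- The events of thread `i` from its index `s` onwards appear contiguously in `σ`. -/
def ContiguousFrom [DecidableEq ι] (σ : List (ι × Event V)) (i : ι) (s : ℕ) : Prop :=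
  ∀ j, s ≤ j → j + 1 < (threadPositions σ i).length → posOf σ i (j + 1) = posOf σ i j + 1

/-- Conflict-graph edge `tr → tw` between outer blocks (suffixes of the threads
starting at indices `s tr`, `s tw`): the last write to some variable `x` in the
outer block of `tw` conflicts with a read of `x` in the outer block of `tr`. -/
def ConflictEdge [DecidableEq ι] (threads : ι → List (Event V)) (s : ι → ℕ) (tr tw : ι) : Prop :=
  tr ≠ tw ∧ ∃ x d d' jr jw, d ≠ d' ∧
    s tr ≤ jr ∧ (threads tr)[jr]? = some (Event.read x d) ∧
    s tw ≤ jw ∧ (threads tw)[jw]? = some (Event.write x d') ∧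
    ∀ j d'', jw < j → (threads tw)[j]? ≠ some (Event.write x d'')

/-- Splitting a list into contiguous blocks immediately after each position in `cut`. -/
def splitAtCuts {α : Type} (l : List α) (cut : Finset ℕ) : List (List α) :=
  let cs := cut.sort (· ≤ ·)
  ((0 :: cs.map (· + 1)).zip (cs.map (· + 1) ++ [l.length])).map fun p => (l.take p.2).drop p.1

/-- Variables of the W[1]-hardness reduction program `P_G`. -/
inductive GVar (α : Type) (k : ℕ) where
  | y (e : Sym2 α)
  | x (j : Fin k)
  | s
  | p (j : ℕ)
deriving DecidableEq

/-- Thread identifiers of `P_G`. -/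
inductive GTId (k : ℕ) where
  | init
  | checker (j : Fin k)
  | sel (j : Fin k)
deriving DecidableEq

variable {α : Type} [Fintype α] [DecidableEq α]

/-- The list of edges of `G` incident on `v`. -/
noncomputable def incEdges (G : SimpleGraph α) [DecidableRel G.Adj] (v : α) : List (Sym2 α) :=
  (G.edgeFinset.filter fun e => v ∈ e).toList

/-- The `Init` thread of `P_G`. -/
noncomputable def initThread (G : SimpleGraph α) [DecidableRel G.Adj] (k : ℕ) :
    List (Event (GVar α k)) :=
  (G.edgeFinset.toList.map fun e => Event.write (GVar.y e) 0) ++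
  ((List.finRange k).map fun j => Event.write (GVar.x j) 1) ++
  [Event.write GVar.s 1, Event.write (GVar.p 0) 1]

/-- The thread `Checker_j` of `P_G`. -/
def checkerThread {k : ℕ} (j : Fin k) : List (Event (GVar α k)) :=
  [Event.read (GVar.p j.val) 1] ++
  (if j.val + 1 ≠ k then [Event.write GVar.s 0] else []) ++
  [Event.read (GVar.x j) 0] ++
  (if j.val + 1 = k then [Event.write GVar.s 1] else []) ++
  [Event.write (GVar.p (j.val + 1)) 1]

/-- The block `B_v^j` of selector thread `Sel_j` for vertex `v`. -/
noncomputable def selBlock (G : SimpleGraph α) [DecidableRel G.Adj] {k : ℕ} (j : Fin k) (v : α) :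
    List (Event (GVar α k)) :=
  ((incEdges G v).flatMap fun e => [Event.read (GVar.y e) 0, Event.write (GVar.y e) (j.val + 1)]) ++
  [Event.read GVar.s 1, Event.write (GVar.x j) 0, Event.write (GVar.x j) 1] ++
  ((incEdges G v).flatMap fun e => [Event.read (GVar.y e) (j.val + 1), Event.write (GVar.y e) 0])

/-- The selector thread `Sel_j` of `P_G`: one block per vertex of `G`. -/
noncomputable def selThread (G : SimpleGraph α) [DecidableRel G.Adj] {k : ℕ} (j : Fin k) :
    List (Event (GVar α k)) :=
  (Finset.univ : Finset α).toList.flatMap (selBlock G j)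

/-- The program `P_G` of the W[1]-hardness reduction with parameter `k`. -/
noncomputable def pgThreads (G : SimpleGraph α) [DecidableRel G.Adj] (k : ℕ) :
    GTId k → List (Event (GVar α k))
  | GTId.init => initThread G k
  | GTId.checker j => checkerThread j
  | GTId.sel j => selThread G j

namespace List

variable {β γ : Type*}

theorem getElem?_filterMap_length_take {f : β → Option γ} {l : List β} {p : ℕ} {a : β}
    {b : γ} (h : l[p]? = some a) (hb : f a = some b) :
    (l.filterMap f)[((l.take p).filterMap f).length]? = some b := by
  obtain ⟨hlt, hget⟩ := getElem?_eq_some_iff.mp h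
  have hsplit : l.filterMap f = (l.take p).filterMap f ++ b :: (l.drop (p + 1)).filterMap f := by
    conv_lhs => rw [← take_append_drop p l, drop_eq_getElem_cons hlt, hget]
    simp [hb]
  rw [hsplit, getElem?_append_right le_rfl]
  simp

theorem exists_getElem?_of_getElem?_filterMap {f : β → Option γ} :
    ∀ {l : List β} {n : ℕ} {b : γ}, (l.filterMap f)[n]? = some b →
      ∃ p a, l[p]? = some a ∧ f a = some b ∧ ((l.take p).filterMap f).length = n
  | [], _, _, h => by simp at h
  | x :: xs, n, b, h => by
    cases hx : f x with
    | none =>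
      rw [filterMap_cons_none hx] at h
      obtain ⟨p, a, hp, ha, hn⟩ := exists_getElem?_of_getElem?_filterMap h
      exact ⟨p + 1, a, hp, ha, by simpa [hx] using hn⟩
    | some c =>
      rw [filterMap_cons_some hx] at h
      cases n with
      | zero => exact ⟨0, x, rfl, by simpa [hx] using h, rfl⟩
      | succ n =>
        obtain ⟨p, a, hp, ha, hn⟩ := exists_getElem?_of_getElem?_filterMap h
        exact ⟨p + 1, a, hp, ha, by simpa [hx] using hn⟩

theorem length_filterMap_take_lt {f : β → Option γ} {l : List β} {p q : ℕ} {a : β} {b : γ}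
    (hpq : p < q) (h : l[p]? = some a) (hb : f a = some b) :
    ((l.take p).filterMap f).length < ((l.take q).filterMap f).length := by
  obtain ⟨r, rfl⟩ := Nat.exists_eq_add_of_lt hpq
  have hsucc : l.take (p + 1) = l.take p ++ [a] := by rw [take_add_one, h]; rfl
  rw [Nat.add_right_comm, take_add, hsucc]
  simp [hb]

def OccursBefore (l : List β) (a b : β) : Prop :=
  ∀ i j : ℕ, l[i]? = some a → l[j]? = some b → i < j

theorem occursBefore_append {l₁ l₂ : List β} {a b : β} (ha : a ∉ l₂) (hb : b ∉ l₁) :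
    OccursBefore (l₁ ++ l₂) a b := by
  intro i j hi hj
  have hi' : i < l₁.length := by
    by_contra hle
    rw [getElem?_append_right (by omega)] at hi
    exact ha (mem_of_getElem? hi)
  have hj' : l₁.length ≤ j := by
    by_contra hlt
    rw [getElem?_append_left (by omega)] at hj
    exact hb (mem_of_getElem? hj)
  omega

theorem getElem?_flatMap_of_eq_append {g : β → List γ} {L A B : List β} {v : β}
    (hL : L = A ++ v :: B) {i : ℕ} {b : γ} (h : (g v)[i]? = some b) :
    (L.flatMap g)[(A.flatMap g).length + i]? = some b := by
  subst hL
  rw [flatMap_append, flatMap_cons, getElem?_append_right (by omega), Nat.add_sub_cancel_left,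
    getElem?_append_left (getElem?_eq_some_iff.mp h).1, h]

theorem exists_eq_append_of_getElem?_flatMap {g : β → List γ} :
    ∀ {L : List β} {n : ℕ} {b : γ}, (L.flatMap g)[n]? = some b →
      ∃ A v B i, L = A ++ v :: B ∧ (g v)[i]? = some b ∧ n = (A.flatMap g).length + i
  | [], _, _, h => by simp at h
  | x :: xs, n, b, h => by
    rw [flatMap_cons] at h
    by_cases hn : n < (g x).length
    · rw [getElem?_append_left hn] at h
      exact ⟨[], x, xs, n, rfl, h, by simp⟩
    · rw [getElem?_append_right (by omega)] at h
      obtain ⟨A, v, B, i, rfl, hv, hi⟩ := exists_eq_append_of_getElem?_flatMap h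
      exact ⟨x :: A, v, B, i, rfl, hv, by simp only [flatMap_cons, length_append]; omega⟩

theorem append_cons_cases {A A' B B' : List β} {v v' : β} (h : A ++ v :: B = A' ++ v' :: B') :
    (A = A' ∧ v = v') ∨ (∃ C, A' = A ++ v :: C) ∨ (∃ C, A = A' ++ v' :: C) := by
  rcases append_eq_append_iff.mp h with
    ⟨_ | ⟨w, C⟩, rfl, hC⟩ | ⟨_ | ⟨w, C⟩, rfl, hC⟩
  · simp_all
  · simp only [cons_append, cons.injEq] at hC
    exact Or.inr (Or.inl ⟨C, by rw [hC.1]⟩)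
  · simp_all
  · simp only [cons_append, cons.injEq] at hC
    exact Or.inr (Or.inr ⟨C, by rw [hC.1]⟩)

theorem getElem?_flatMap_pair (L : List β) (f g : β → γ) (m : ℕ) :
    (L.flatMap fun b => [f b, g b])[2 * m]? = L[m]?.map f ∧
      (L.flatMap fun b => [f b, g b])[2 * m + 1]? = L[m]?.map g := by
  induction L generalizing m with
  | nil => simp
  | cons x xs ih =>
    cases m with
    | zero => simp
    | succ m => simpa [Nat.mul_succ, Nat.add_right_comm _ 2 1] using ih m

theorem length_flatMap_pair (L : List β) (f g : β → γ) :
    (L.flatMap fun b => [f b, g b]).length = 2 * L.length := by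
  induction L with
  | nil => simp
  | cons x xs ih => simp [ih]; omega

theorem getElem?_append_add {l₁ l₂ : List β} {n : ℕ} (h : l₁.length = n) (i : ℕ) :
    (l₁ ++ l₂)[n + i]? = l₂[i]? := by
  subst h
  rw [getElem?_append_right (by omega), Nat.add_sub_cancel_left]

theorem exists_of_getElem?_flatMap_pair {L : List β} {f g : β → γ} {i : ℕ} {c : γ}
    (h : (L.flatMap fun b => [f b, g b])[i]? = some c) :
    ∃ m b, L[m]? = some b ∧ ((i = 2 * m ∧ f b = c) ∨ (i = 2 * m + 1 ∧ g b = c)) := by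
  obtain ⟨h0, h1⟩ := getElem?_flatMap_pair L f g (i / 2)
  rcases Nat.even_or_odd' i with ⟨m, rfl | rfl⟩
  · rw [show 2 * m / 2 = m by omega, h] at h0
    obtain ⟨b, hb, rfl⟩ := Option.map_eq_some_iff.mp h0.symm
    exact ⟨m, b, hb, Or.inl ⟨rfl, rfl⟩⟩
  · rw [show (2 * m + 1) / 2 = m by omega, h] at h1
    obtain ⟨b, hb, rfl⟩ := Option.map_eq_some_iff.mp h1.symm
    exact ⟨m, b, hb, Or.inr ⟨rfl, rfl⟩⟩

end List

theorem SimpleGraph.exists_card_eq_of_pairwise_disjoint_incidenceSet {β : Type*} [DecidableEq β]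
    {H : SimpleGraph β} (hdeg : ∀ v, ∃ u, H.Adj v u) {k : ℕ} {f : Fin k → β}
    (hf : Pairwise fun a b => Disjoint (H.incidenceSet (f a)) (H.incidenceSet (f b))) :
    ∃ I : Finset β, I.card = k ∧ ∀ a ∈ I, ∀ b ∈ I, ¬ H.Adj a b := by
  have hinj : f.Injective := fun a b hab => by
    by_contra hne
    obtain ⟨u, hu⟩ := hdeg (f a)
    exact Set.disjoint_left.mp (hf hne) (H.mk'_mem_incidenceSet_left_iff.mpr hu)
      (hab ▸ H.mk'_mem_incidenceSet_left_iff.mpr hu)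
  refine ⟨Finset.univ.image f, by simp [Finset.card_image_of_injective _ hinj], ?_⟩
  simp only [Finset.mem_image, Finset.mem_univ, true_and]
  rintro _ ⟨a, rfl⟩ _ ⟨b, rfl⟩ hab
  have hne : a ≠ b := by
    rintro rfl
    exact hab.ne rfl
  exact Set.disjoint_left.mp (hf hne) (H.mk'_mem_incidenceSet_left_iff.mpr hab)
    (H.mk'_mem_incidenceSet_right_iff.mpr hab)

theorem SC.exists_write {σ : List (ι × Event V)} {p : ℕ} {t : ι} {x : V} {d : ℕ}
    (hSC : SC (σ.map Prod.snd))
    (h : σ[p]? = some (t, Event.read x d)) :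
    ∃ q t', q < p ∧ σ[q]? = some (t', Event.write x d) ∧
      ∀ r t'' d', q < r → r < p → d' ≠ d → σ[r]? ≠ some (t'', Event.write x d') := by
  obtain ⟨q, hqp, hq, hno⟩ := hSC p x d (by simp [h])
  obtain ⟨⟨t', e⟩, hσq, rfl⟩ : ∃ a, σ[q]? = some a ∧ a.2 = Event.write x d := by
    simpa using hq
  exact ⟨q, t', hqp, hσq, fun r t'' d' hqr hrp hd' hr => hno r hqr hrp d' hd' (by simp [hr])⟩

section Interleaving

variable [DecidableEq ι] {threads : ι → List (Event V)} {σ : List (ι × Event V)}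
  {t : ι} {p q : ℕ} {e e' : Event V}

def threadIndex (σ : List (ι × Event V)) (t : ι) (p : ℕ) : ℕ :=
  ((σ.take p).filterMap fun a => if a.1 = t then some a.2 else none).length

theorem IsInterleaving.exists_getElem? (hI : IsInterleaving threads σ) {n : ℕ}
    (h : (threads t)[n]? = some e) : ∃ p, σ[p]? = some (t, e) ∧ threadIndex σ t p = n := by
  rw [← hI t] at h
  obtain ⟨p, ⟨t', e'⟩, hp, ha, hn⟩ := List.exists_getElem?_of_getElem?_filterMap h
  obtain ⟨rfl, rfl⟩ : t' = t ∧ e' = e := by split_ifs at ha; simp_all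
  exact ⟨p, hp, hn⟩

theorem IsInterleaving.exists_getElem?_of_mem (hI : IsInterleaving threads σ)
    (h : e ∈ threads t) : ∃ p : ℕ, σ[p]? = some (t, e) := by
  obtain ⟨n, hn, rfl⟩ := List.getElem_of_mem h
  obtain ⟨p, hp, -⟩ := hI.exists_getElem? (List.getElem?_eq_getElem hn)
  exact ⟨p, hp⟩

theorem IsInterleaving.getElem?_threadIndex (hI : IsInterleaving threads σ)
    (h : σ[p]? = some (t, e)) : (threads t)[threadIndex σ t p]? = some e := by
  rw [← hI t]
  exact List.getElem?_filterMap_length_take h (by simp)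

theorem IsInterleaving.mem_of_getElem? (hI : IsInterleaving threads σ)
    (h : σ[p]? = some (t, e)) : e ∈ threads t :=
  List.mem_of_getElem? (hI.getElem?_threadIndex h)

theorem threadIndex_lt_threadIndex_iff (hp : σ[p]? = some (t, e)) (hq : σ[q]? = some (t, e')) :
    threadIndex σ t p < threadIndex σ t q ↔ p < q := by
  refine ⟨fun h => ?_, fun h => List.length_filterMap_take_lt h hp (b := e) (by simp)⟩
  by_contra hpq
  rcases (not_lt.mp hpq).lt_or_eq with hqp | rfl
  · exact (List.length_filterMap_take_lt hqp hq (b := e') (by simp)).not_gt h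
  · exact lt_irrefl _ h

theorem threadIndex_le_threadIndex_iff (hp : σ[p]? = some (t, e)) (hq : σ[q]? = some (t, e')) :
    threadIndex σ t p ≤ threadIndex σ t q ↔ p ≤ q := by
  simpa only [not_lt] using (threadIndex_lt_threadIndex_iff hq hp).not

theorem IsInterleaving.lt_of_occursBefore (hI : IsInterleaving threads σ)
    (hp : σ[p]? = some (t, e)) (hq : σ[q]? = some (t, e')) (h : (threads t).OccursBefore e e') :
    p < q :=
  (threadIndex_lt_threadIndex_iff hp hq).mp
    (h _ _ (hI.getElem?_threadIndex hp) (hI.getElem?_threadIndex hq))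

end Interleaving

section ProgramFacts

variable {k : ℕ}

theorem checkerThread_of_not_last {β : Type} {j : Fin k} (h : j.val + 1 ≠ k) :
    checkerThread (α := β) j = [Event.read (GVar.p j) 1, Event.write GVar.s 0,
      Event.read (GVar.x j) 0, Event.write (GVar.p (j + 1)) 1] := by
  simp [checkerThread, h]

theorem checkerThread_of_last {β : Type} {j : Fin k} (h : j.val + 1 = k) :
    checkerThread (α := β) j = [Event.read (GVar.p j) 1, Event.read (GVar.x j) 0,
      Event.write GVar.s 1, Event.write (GVar.p (j + 1)) 1] := by
  simp [checkerThread, h]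

theorem checkerThread_occursBefore_readP_readX {β : Type} (j : Fin k) :
    (checkerThread (α := β) j).OccursBefore (Event.read (GVar.p j) 1)
      (Event.read (GVar.x j) 0) := by
  by_cases h : j.val + 1 = k
  · rw [checkerThread_of_last h]
    exact List.occursBefore_append (l₁ := [_]) (by simp) (by simp)
  · rw [checkerThread_of_not_last h]
    exact List.occursBefore_append (l₁ := [_]) (by simp) (by simp)

theorem checkerThread_occursBefore_readX_writeP {β : Type} (j : Fin k) :
    (checkerThread (α := β) j).OccursBefore (Event.read (GVar.x j) 0)
      (Event.write (GVar.p (j + 1)) 1) := by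
  by_cases h : j.val + 1 = k
  · rw [checkerThread_of_last h]
    exact List.occursBefore_append (l₁ := [_, _]) (by simp) (by simp)
  · rw [checkerThread_of_not_last h]
    exact List.occursBefore_append (l₁ := [_, _, _]) (by simp) (by simp)

theorem checkerThread_occursBefore_readP_writeS {β : Type} {j : Fin k} (h : j.val + 1 ≠ k) :
    (checkerThread (α := β) j).OccursBefore (Event.read (GVar.p j) 1) (Event.write GVar.s 0) := by
  rw [checkerThread_of_not_last h]
  exact List.occursBefore_append (l₁ := [_]) (by simp) (by simp)

theorem checkerThread_occursBefore_writeS_readX {β : Type} {j : Fin k} (h : j.val + 1 ≠ k) :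
    (checkerThread (α := β) j).OccursBefore (Event.write GVar.s 0) (Event.read (GVar.x j) 0) := by
  rw [checkerThread_of_not_last h]
  exact List.occursBefore_append (l₁ := [_, _]) (by simp) (by simp)

theorem checkerThread_occursBefore_readX_writeS {β : Type} {j : Fin k} (h : j.val + 1 = k) :
    (checkerThread (α := β) j).OccursBefore (Event.read (GVar.x j) 0) (Event.write GVar.s 1) := by
  rw [checkerThread_of_last h]
  exact List.occursBefore_append (l₁ := [_, _]) (by simp) (by simp)

theorem initThread_occursBefore_writeS_writeP {β : Type} [Fintype β] {H : SimpleGraph β}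
    [DecidableRel H.Adj] :
    (initThread H k).OccursBefore (Event.write GVar.s 1) (Event.write (GVar.p 0) 1) := by
  rw [initThread, List.append_cons _ (Event.write GVar.s 1)]
  exact List.occursBefore_append (by simp) (by simp)

variable {G : SimpleGraph α} [DecidableRel G.Adj]

theorem eq_sel_of_write_x_zero {t : GTId k} {j : Fin k}
    (h : Event.write (GVar.x j) 0 ∈ pgThreads G k t) : t = GTId.sel j := by
  cases t <;> simp [pgThreads, initThread, checkerThread, selThread, selBlock] at h ⊢
  exact h.2.symm

theorem eq_sel_of_write_y_succ {t : GTId k} {j : Fin k} {e : Sym2 α}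
    (h : Event.write (GVar.y e) (j.val + 1) ∈ pgThreads G k t) : t = GTId.sel j := by
  cases t <;> simp [pgThreads, initThread, checkerThread, selThread, selBlock] at h ⊢
  exact Fin.ext h.2.symm

theorem exists_checker_of_write_p_succ {t : GTId k} {m d : ℕ}
    (h : Event.write (GVar.p (m + 1)) d ∈ pgThreads G k t) :
    ∃ j : Fin k, t = GTId.checker j ∧ j.val = m := by
  cases t <;> simp [pgThreads, initThread, checkerThread, selThread, selBlock] at h ⊢
  omega

theorem eq_init_of_write_p_zero {t : GTId k} {d : ℕ}
    (h : Event.write (GVar.p 0) d ∈ pgThreads G k t) : t = GTId.init := by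
  cases t <;> simp [pgThreads, initThread, checkerThread, selThread, selBlock] at h ⊢

theorem eq_init_or_last_of_write_s_one {t : GTId k}
    (h : Event.write GVar.s 1 ∈ pgThreads G k t) :
    t = GTId.init ∨ ∃ j : Fin k, t = GTId.checker j ∧ j.val + 1 = k := by
  cases t <;> simp [pgThreads, initThread, checkerThread, selThread, selBlock] at h ⊢
  exact h

end ProgramFacts

section SelectorThreads

variable {k : ℕ} {G : SimpleGraph α} [DecidableRel G.Adj] {j : Fin k} {v : α} {e : Sym2 α}
  {m i : ℕ}

-- The sweeps are written in the shape `fun e => [f e, g e]` of `List.getElem?_flatMap_pair`.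
theorem selBlock_eq (j : Fin k) (v : α) :
    selBlock G j v =
      ((incEdges G v).flatMap fun e =>
          [(fun e => Event.read (GVar.y e) 0) e,
            (fun e => Event.write (GVar.y e) (j.val + 1)) e]) ++
        ([Event.read GVar.s 1, Event.write (GVar.x j) 0, Event.write (GVar.x j) 1] ++
      ((incEdges G v).flatMap fun e =>
          [(fun e => Event.read (GVar.y e) (j.val + 1)) e,
            (fun e => Event.write (GVar.y e) 0) e])) :=
  List.append_assoc _ _ _

theorem length_selBlock (j : Fin k) (v : α) :
    (selBlock G j v).length = 4 * (incEdges G v).length + 3 := by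
  simp only [selBlock_eq, List.length_append, List.length_flatMap_pair, List.length_cons,
    List.length_nil]
  omega

theorem selBlock_getElem?_writeY (hm : (incEdges G v)[m]? = some e) :
    (selBlock G j v)[2 * m + 1]? = some (Event.write (GVar.y e) (j.val + 1)) := by
  have hlt : m < (incEdges G v).length := (List.getElem?_eq_some_iff.mp hm).1
  rw [selBlock_eq, List.getElem?_append_left (by rw [List.length_flatMap_pair]; omega),
    (List.getElem?_flatMap_pair _ _ _ m).2, hm]
  rfl

theorem selBlock_getElem?_readS :
    (selBlock G j v)[2 * (incEdges G v).length]? = some (Event.read GVar.s 1) := by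
  rw [← Nat.add_zero (2 * _), selBlock_eq, List.getElem?_append_add (List.length_flatMap_pair ..)]
  rfl

theorem selBlock_getElem?_writeX_one :
    (selBlock G j v)[2 * (incEdges G v).length + 2]? = some (Event.write (GVar.x j) 1) := by
  rw [selBlock_eq, List.getElem?_append_add (List.length_flatMap_pair ..)]
  rfl

theorem selBlock_getElem?_readY (hm : (incEdges G v)[m]? = some e) :
    (selBlock G j v)[2 * (incEdges G v).length + 3 + 2 * m]? =
      some (Event.read (GVar.y e) (j.val + 1)) := by
  rw [Nat.add_assoc, selBlock_eq, List.getElem?_append_add (List.length_flatMap_pair ..),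
    List.getElem?_append_add (n := 3) rfl, (List.getElem?_flatMap_pair _ _ _ m).1, hm]
  rfl

theorem selBlock_getElem?_resetY (hm : (incEdges G v)[m]? = some e) :
    (selBlock G j v)[2 * (incEdges G v).length + 3 + 2 * m + 1]? =
      some (Event.write (GVar.y e) 0) := by
  rw [Nat.add_assoc, Nat.add_assoc, selBlock_eq,
    List.getElem?_append_add (List.length_flatMap_pair ..),
    List.getElem?_append_add (n := 3) rfl, (List.getElem?_flatMap_pair _ _ _ m).2, hm]
  rfl

theorem selBlock_getElem?_cases {ev : Event (GVar α k)} (h : (selBlock G j v)[i]? = some ev) :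
    (∃ m e, (incEdges G v)[m]? = some e ∧ ((i = 2 * m ∧ ev = Event.read (GVar.y e) 0) ∨
      (i = 2 * m + 1 ∧ ev = Event.write (GVar.y e) (j.val + 1)))) ∨
    (i = 2 * (incEdges G v).length ∧ ev = Event.read GVar.s 1) ∨
    (i = 2 * (incEdges G v).length + 1 ∧ ev = Event.write (GVar.x j) 0) ∨
    (i = 2 * (incEdges G v).length + 2 ∧ ev = Event.write (GVar.x j) 1) ∨
    (∃ m e, (incEdges G v)[m]? = some e ∧
      ((i = 2 * (incEdges G v).length + 3 + 2 * m ∧ ev = Event.read (GVar.y e) (j.val + 1)) ∨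
      (i = 2 * (incEdges G v).length + 3 + 2 * m + 1 ∧ ev = Event.write (GVar.y e) 0))) := by
  rw [selBlock_eq] at h
  by_cases hi : i < 2 * (incEdges G v).length
  · rw [List.getElem?_append_left (by rwa [List.length_flatMap_pair])] at h
    obtain ⟨m, e, hm, hc⟩ := List.exists_of_getElem?_flatMap_pair h
    exact Or.inl ⟨m, e, hm, by simpa [eq_comm] using hc⟩
  obtain ⟨i, rfl⟩ := Nat.exists_eq_add_of_le (not_lt.mp hi)
  rw [List.getElem?_append_add (List.length_flatMap_pair ..)] at h
  rcases i with _ | _ | _ | i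
  · simp_all
  · simp_all
  · simp_all
  rw [show i + 3 = 3 + i by omega, List.getElem?_append_add (n := 3) rfl] at h
  obtain ⟨m, e, hm, hc⟩ := List.exists_of_getElem?_flatMap_pair h
  refine Or.inr (Or.inr (Or.inr (Or.inr ⟨m, e, hm, ?_⟩)))
  rcases hc with ⟨rfl, rfl⟩ | ⟨rfl, rfl⟩
  · exact Or.inl ⟨by omega, rfl⟩
  · exact Or.inr ⟨by omega, rfl⟩

theorem eq_of_selBlock_getElem?_writeX_zero {j' : Fin k}
    (h : (selBlock G j v)[i]? = some (Event.write (GVar.x j') 0)) :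
    i = 2 * (incEdges G v).length + 1 := by
  rcases selBlock_getElem?_cases h with
    ⟨_, _, _, h | h⟩ | h | h | h | ⟨_, _, _, h | h⟩ <;>
    simp_all

theorem exists_of_selBlock_getElem?_writeY_succ
    (h : (selBlock G j v)[i]? = some (Event.write (GVar.y e) (j.val + 1))) :
    ∃ m, (incEdges G v)[m]? = some e ∧ i = 2 * m + 1 := by
  rcases selBlock_getElem?_cases h with
    ⟨m, e', hm, h | h⟩ | h | h | h | ⟨_, _, _, h | h⟩ <;>
    simp_all

-- The bound on `i` is the index in `Sel_j` of the read `r(y_e, j+1)` of block `B_v^j`.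
theorem selThread_writeY_eq_or_exists_resetY {A B : List α}
    (hL : (Finset.univ : Finset α).toList = A ++ v :: B) (hm : (incEdges G v)[m]? = some e)
    (hi : (selThread G j)[i]? = some (Event.write (GVar.y e) (j.val + 1)))
    (hlt : i < (A.flatMap (selBlock G j)).length + (2 * (incEdges G v).length + 3 + 2 * m)) :
    i = (A.flatMap (selBlock G j)).length + (2 * m + 1) ∨
      ∃ i', i < i' ∧
        i' < (A.flatMap (selBlock G j)).length + (2 * (incEdges G v).length + 3 + 2 * m) ∧
        (selThread G j)[i']? = some (Event.write (GVar.y e) 0) := by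
  obtain ⟨A', u, B', i₀, hL', hblk, rfl⟩ := List.exists_eq_append_of_getElem?_flatMap hi
  obtain ⟨m', hm', rfl⟩ := exists_of_selBlock_getElem?_writeY_succ hblk
  have hmv : m < (incEdges G v).length := (List.getElem?_eq_some_iff.mp hm).1
  have hmu : m' < (incEdges G u).length := (List.getElem?_eq_some_iff.mp hm').1
  rcases List.append_cons_cases (hL.symm.trans hL') with
    ⟨rfl, rfl⟩ | ⟨C, rfl⟩ | ⟨C, rfl⟩
  · left
    rw [(List.getElem?_inj hmu (Finset.nodup_toList _)).mp (hm'.trans hm.symm)]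
  · simp only [List.flatMap_append, List.flatMap_cons, List.length_append, length_selBlock] at hlt
    omega
  · right
    refine ⟨(A'.flatMap (selBlock G j)).length + (2 * (incEdges G u).length + 3 + 2 * m' + 1),
      by omega, ?_, List.getElem?_flatMap_of_eq_append hL' (selBlock_getElem?_resetY hm')⟩
    simp only [List.flatMap_append, List.flatMap_cons, List.length_append, length_selBlock]
    omega

end SelectorThreads

section Schedule

variable {k : ℕ} {G : SimpleGraph α} [DecidableRel G.Adj]
  {σ : List (GTId k × Event (GVar α k))}

theorem checkerReadX_lt_of_succ (hI : IsInterleaving (pgThreads G k) σ)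
    (hSC : SC (σ.map Prod.snd)) {a b : Fin k} (hab : b.val = a.val + 1) {pa pb : ℕ}
    (ha : σ[pa]? = some (GTId.checker a, Event.read (GVar.x a) 0))
    (hb : σ[pb]? = some (GTId.checker b, Event.read (GVar.x b) 0)) : pa < pb := by
  obtain ⟨r, hr⟩ := hI.exists_getElem?_of_mem (t := GTId.checker b)
    (e := Event.read (GVar.p b) 1) (by simp [pgThreads, checkerThread])
  obtain ⟨q, t, hqr, hq, -⟩ := hSC.exists_write hr
  rw [hab] at hq
  obtain ⟨a', rfl, ha'⟩ := exists_checker_of_write_p_succ (hI.mem_of_getElem? hq)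
  obtain rfl : a = a' := Fin.ext ha'.symm
  have hpq : pa < q := hI.lt_of_occursBefore ha hq (checkerThread_occursBefore_readX_writeP a)
  have hrb : r < pb := hI.lt_of_occursBefore hr hb (checkerThread_occursBefore_readP_readX b)
  omega

theorem strictMono_checkerReadX (hI : IsInterleaving (pgThreads G k) σ)
    (hSC : SC (σ.map Prod.snd)) {c : Fin k → ℕ}
    (hc : ∀ j, σ[c j]? = some (GTId.checker j, Event.read (GVar.x j) 0)) : StrictMono c := by
  rcases k with _ | n
  · exact fun a => a.elim0
  · exact Fin.strictMono_iff_lt_succ.mpr fun i =>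
      checkerReadX_lt_of_succ hI hSC (by simp) (hc _) (hc _)

-- `s = 1` is written by `Init`, before `Checker_0` resets `s` to `0` on its way to `c j₀`,
-- and otherwise only by the last checker, after every `c m`.
theorem readS_lt_checkerReadX_zero (hI : IsInterleaving (pgThreads G k) σ)
    (hSC : SC (σ.map Prod.snd)) {c : Fin k → ℕ}
    (hc : ∀ j, σ[c j]? = some (GTId.checker j, Event.read (GVar.x j) 0))
    {j₀ m : Fin k} (hj₀ : j₀.val = 0) {U : ℕ} {t : GTId k}
    (hU : σ[U]? = some (t, Event.read GVar.s 1)) (hUm : U < c m) : U < c j₀ := by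
  obtain ⟨w, tw, hwU, hw, hno⟩ := hSC.exists_write hU
  rcases eq_init_or_last_of_write_s_one (hI.mem_of_getElem? hw) with rfl | ⟨j, rfl, hj⟩
  · by_cases hlast : j₀.val + 1 = k
    · rwa [show m = j₀ from Fin.ext (by omega)] at hUm
    obtain ⟨r, hr⟩ := hI.exists_getElem?_of_mem (t := GTId.checker j₀)
      (e := Event.read (GVar.p j₀) 1) (by simp [pgThreads, checkerThread])
    obtain ⟨z, hz⟩ := hI.exists_getElem?_of_mem (t := GTId.checker j₀)
      (e := Event.write GVar.s 0) (by simp [pgThreads, checkerThread, hlast])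
    obtain ⟨q, tq, hqr, hq, -⟩ := hSC.exists_write hr
    rw [hj₀] at hq
    obtain rfl := eq_init_of_write_p_zero (hI.mem_of_getElem? hq)
    have hwq : w < q := hI.lt_of_occursBefore hw hq initThread_occursBefore_writeS_writeP
    have hrz : r < z := hI.lt_of_occursBefore hr hz (checkerThread_occursBefore_readP_writeS hlast)
    have hzc : z < c j₀ :=
      hI.lt_of_occursBefore hz (hc j₀) (checkerThread_occursBefore_writeS_readX hlast)
    have hzU : ¬ z < U := fun hzU => hno z _ 0 (by omega) hzU (by decide) hz
    have hzU' : z ≠ U := by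
      rintro rfl
      simp [hz] at hU
    omega
  · have hcw : c j < w :=
      hI.lt_of_occursBefore (hc j) hw (checkerThread_occursBefore_readX_writeS hj)
    have hcm : c m ≤ c j :=
      (strictMono_checkerReadX hI hSC hc).monotone (Fin.le_def.mpr (by omega))
    omega

theorem exists_selBlock_of_checkerReadX (hI : IsInterleaving (pgThreads G k) σ)
    (hSC : SC (σ.map Prod.snd)) {j : Fin k} {c : ℕ}
    (hc : σ[c]? = some (GTId.checker j, Event.read (GVar.x j) 0)) :
    ∃ A v B U, (Finset.univ : Finset α).toList = A ++ v :: B ∧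
      σ[U]? = some (GTId.sel j, Event.read GVar.s 1) ∧
      threadIndex σ (GTId.sel j) U =
        (A.flatMap (selBlock G j)).length + 2 * (incEdges G v).length ∧
      U < c ∧
      ∀ p ev, σ[p]? = some (GTId.sel j, ev) →
        (A.flatMap (selBlock G j)).length + 2 * (incEdges G v).length + 2 ≤
          threadIndex σ (GTId.sel j) p → c < p := by
  obtain ⟨w, t, hwc, hw, hno⟩ := hSC.exists_write hc
  obtain rfl := eq_sel_of_write_x_zero (hI.mem_of_getElem? hw)
  obtain ⟨A, v, B, i, hL, hblk, hwidx⟩ :=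
    List.exists_eq_append_of_getElem?_flatMap (hI.getElem?_threadIndex hw)
  obtain rfl := eq_of_selBlock_getElem?_writeX_zero hblk
  obtain ⟨U, hU, hUidx⟩ := hI.exists_getElem? (t := GTId.sel j)
    (List.getElem?_flatMap_of_eq_append hL selBlock_getElem?_readS)
  obtain ⟨X, hX, hXidx⟩ := hI.exists_getElem? (t := GTId.sel j)
    (List.getElem?_flatMap_of_eq_append hL selBlock_getElem?_writeX_one)
  have hUw : U < w := (threadIndex_lt_threadIndex_iff hU hw).mp (by omega)
  have hwX : w < X := (threadIndex_lt_threadIndex_iff hw hX).mp (by omega)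
  have hcX : c < X := by
    have hXc : ¬ X < c := fun hXc => hno X _ 1 hwX hXc (by decide) hX
    have hXc' : X ≠ c := by
      rintro rfl
      simp [hX] at hc
    omega
  refine ⟨A, v, B, U, hL, hU, hUidx, by omega, fun p ev hp hpidx => ?_⟩
  exact lt_of_lt_of_le hcX ((threadIndex_le_threadIndex_iff hX hp).mp (by omega))

variable (G) in
/-- At time `T`, `Sel_j` is inside its block `B_v^j`, which starts at index
`(A.flatMap (selBlock G j)).length` of `Sel_j`: the first sweep and `r(s,1)` of the block lie
before `T`, its `w(x_j,1)` and second sweep after `T`. -/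
def BlockOpenAt (σ : List (GTId k × Event (GVar α k))) (j : Fin k) (A : List α) (v : α)
    (T : ℕ) : Prop :=
  (∀ p ev, σ[p]? = some (GTId.sel j, ev) →
    threadIndex σ (GTId.sel j) p ≤
      (A.flatMap (selBlock G j)).length + 2 * (incEdges G v).length → p < T) ∧
  (∀ p ev, σ[p]? = some (GTId.sel j, ev) →
    (A.flatMap (selBlock G j)).length + 2 * (incEdges G v).length + 2 ≤
      threadIndex σ (GTId.sel j) p → T < p)

theorem exists_blockOpenAt (hI : IsInterleaving (pgThreads G k) σ) (hSC : SC (σ.map Prod.snd)) :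
    ∃ (A : Fin k → List α) (v : Fin k → α) (B : Fin k → List α) (T : ℕ),
      (∀ j, (Finset.univ : Finset α).toList = A j ++ v j :: B j) ∧
      ∀ j, BlockOpenAt G σ j (A j) (v j) T := by
  choose c hc using fun j : Fin k => hI.exists_getElem?_of_mem (t := GTId.checker j)
    (e := Event.read (GVar.x j) 0) (by simp [pgThreads, checkerThread])
  choose A v B U hL hU hUidx hUc hcX using fun j => exists_selBlock_of_checkerReadX hI hSC (hc j)
  rcases Nat.eq_zero_or_pos k with rfl | hk
  · exact ⟨A, v, B, 0, hL, fun j => j.elim0⟩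
  let j₀ : Fin k := ⟨0, hk⟩
  refine ⟨A, v, B, c j₀, hL, fun j => ⟨fun p ev hp hpidx => ?_, fun p ev hp hpidx => ?_⟩⟩
  · calc p ≤ U j := (threadIndex_le_threadIndex_iff hp (hU j)).mp (hpidx.trans_eq (hUidx j).symm)
      _ < c j₀ := readS_lt_checkerReadX_zero hI hSC hc rfl (hU j) (hUc j)
  · calc c j₀ ≤ c j :=
        (strictMono_checkerReadX hI hSC hc).monotone (Fin.le_def.mpr (Nat.zero_le _))
      _ < p := hcX j p ev hp hpidx

-- `Q` is the block's own write of `a+1` to `y_e`. The second sweep reads `y_e = a+1` after `T`,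
-- and can only see `Q`: an older write of `a+1` by `Sel_a` is reset to `0` in its own block.
theorem BlockOpenAt.exists_writeY_forall_lt (hI : IsInterleaving (pgThreads G k) σ)
    (hSC : SC (σ.map Prod.snd)) {a : Fin k} {A B : List α} {v : α} {T : ℕ}
    (hL : (Finset.univ : Finset α).toList = A ++ v :: B) (hopen : BlockOpenAt G σ a A v T)
    {e : Sym2 α} (he : e ∈ incEdges G v) :
    ∃ Q < T, σ[Q]? = some (GTId.sel a, Event.write (GVar.y e) (a.val + 1)) ∧
      ∀ Q' t d, σ[Q']? = some (t, Event.write (GVar.y e) d) → Q' < T → d ≠ a.val + 1 →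
        Q' < Q := by
  obtain ⟨m, hm⟩ := List.mem_iff_getElem?.mp he
  have hmn : m < (incEdges G v).length := (List.getElem?_eq_some_iff.mp hm).1
  obtain ⟨Q, hQ, hQidx⟩ := hI.exists_getElem? (t := GTId.sel a)
    (List.getElem?_flatMap_of_eq_append hL (selBlock_getElem?_writeY hm))
  obtain ⟨P, hP, hPidx⟩ := hI.exists_getElem? (t := GTId.sel a)
    (List.getElem?_flatMap_of_eq_append hL (selBlock_getElem?_readY hm))
  refine ⟨Q, hopen.1 Q _ hQ (by omega), hQ, fun Q' t d hQ' hQ'T hd => ?_⟩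
  have hTP : T < P := hopen.2 P _ hP (by omega)
  obtain ⟨q, tq, hqP, hq, hno⟩ := hSC.exists_write hP
  obtain rfl := eq_sel_of_write_y_succ (hI.mem_of_getElem? hq)
  have hqPidx := (threadIndex_lt_threadIndex_iff hq hP).mpr hqP
  rcases selThread_writeY_eq_or_exists_resetY hL hm (hI.getElem?_threadIndex hq) (by omega) with
    hqQ | ⟨i, hqi, hiP, hi⟩
  · obtain rfl : q = Q := le_antisymm ((threadIndex_le_threadIndex_iff hq hQ).mp (by omega))
      ((threadIndex_le_threadIndex_iff hQ hq).mp (by omega))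
    have hQ'q : Q' ≠ q := by
      rintro rfl
      simp [hQ] at hQ'
      omega
    by_contra hle
    exact hno Q' t d (by omega) (by omega) hd hQ'
  · obtain ⟨z, hz, hzidx⟩ := hI.exists_getElem? (t := GTId.sel a) hi
    have hqz : q < z := (threadIndex_lt_threadIndex_iff hq hz).mp (by omega)
    have hzP : z < P := (threadIndex_lt_threadIndex_iff hz hP).mp (by omega)
    exact absurd hz (hno z _ 0 hqz hzP (by omega))

theorem mem_incEdges_iff {v : α} {e : Sym2 α} :
    e ∈ incEdges G v ↔ e ∈ G.incidenceSet v := by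
  simp [incEdges, SimpleGraph.incidenceSet]

theorem disjoint_incidenceSet_of_blockOpenAt (hI : IsInterleaving (pgThreads G k) σ)
    (hSC : SC (σ.map Prod.snd)) {i j : Fin k} (hij : i ≠ j) {A A' B B' : List α} {v v' : α}
    {T : ℕ} (hL : (Finset.univ : Finset α).toList = A ++ v :: B)
    (hL' : (Finset.univ : Finset α).toList = A' ++ v' :: B') (hi : BlockOpenAt G σ i A v T)
    (hj : BlockOpenAt G σ j A' v' T) : Disjoint (G.incidenceSet v) (G.incidenceSet v') := by
  refine Set.disjoint_left.mpr fun e he he' => ?_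
  obtain ⟨Qi, hQiT, hQi, hi⟩ := hi.exists_writeY_forall_lt hI hSC hL (mem_incEdges_iff.mpr he)
  obtain ⟨Qj, hQjT, hQj, hj⟩ := hj.exists_writeY_forall_lt hI hSC hL' (mem_incEdges_iff.mpr he')
  have hval : i.val ≠ j.val := Fin.val_ne_of_ne hij
  have := hi Qj _ _ hQj hQjT (by omega)
  have := hj Qi _ _ hQi hQiT (by omega)
  omega

end Schedule

/-- if `P_G` has an SC interleaving (with any number of preemptions),
then `G` (every vertex of which has a neighbour, as in the construction) has an
independent set of size `k`. -/
theorem stmt12 (G : SimpleGraph α) [DecidableRel G.Adj] (k : ℕ)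
    (hdeg : ∀ v : α, ∃ u, G.Adj v u)
    (h : ∃ σ : List (GTId k × Event (GVar α k)),
        IsInterleaving (pgThreads G k) σ ∧ SC (σ.map Prod.snd)) :
    ∃ I : Finset α, I.card = k ∧ ∀ a ∈ I, ∀ b ∈ I, ¬ G.Adj a b := by
  obtain ⟨σ, hI, hSC⟩ := h
  obtain ⟨A, v, B, T, hL, hopen⟩ := exists_blockOpenAt hI hSC
  exact SimpleGraph.exists_card_eq_of_pairwise_disjoint_incidenceSet hdeg fun i j hij =>
    disjoint_incidenceSet_of_blockOpenAt hI hSC hij (hL i) (hL j) (hopen i) (hopen j)
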